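/- Conditional expectation is the unique Bregman projection: let X be an integrable random variable taking values in ℝ^k on a probability space, with E[φ(X)] finite, and let m be a sub-σ-algebra. Then for every m-measurable integrable random variable Y taking values in ℝ^k, E[D_φ(X, Y)] ≥ E[D_φ(X, E[X | m])], and equality holds if and only if Y = E[X | m] almost surely; that is, the conditional expectation E[X | m] is the almost-surely unique minimizer of the expected Bregman loss over m-measurable predictors. -/

import Mathlib

/-!
Write `Z = E[X|m]`. Pointwise, `D(X,Y) = D(X,Z) + D(Z,Y) + ⟨X - Z, ∇φ(Z) - ∇φ(Y)⟩`, and the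
last term pairs the `m`-measurable `∇φ(Z) - ∇φ(Y)` with `X - Z`, whose conditional expectation
vanishes, so it has mean zero. Hence `E D(X,Y) = E D(X,Z) + E D(Z,Y)`; as `D ≥ 0` vanishes only
on the diagonal, this gives both the inequality and its equality case. The pairing is not
integrable a priori; truncating on `{‖∇φ(Z) - ∇φ(Y)‖ ≤ n}` shows that it is integrable as soon
as it is bounded on one side by an integrable function, which is the case when either side of
the identity is finite.
-/

open MeasureTheory ProbabilityTheory

/-- The Bregman loss `D_φ(a,b) = φ(a) − φ(b) − ⟨a − b, ∇φ(b)⟩` associated to a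
differentiable function `φ` on `ℝ^k`. -/
noncomputable def bregman {k : ℕ} (φ : EuclideanSpace ℝ (Fin k) → ℝ)
    (a b : EuclideanSpace ℝ (Fin k)) : ℝ :=
  φ a - φ b - fderiv ℝ φ b (a - b)

open Set Filter

theorem ConvexOn.apply_sub_le_of_hasFDerivAt {E : Type*} [NormedAddCommGroup E]
    [NormedSpace ℝ E] {φ : E → ℝ} (hφ : ConvexOn ℝ univ φ) {φ' : E →L[ℝ] ℝ} {b : E}
    (hb : HasFDerivAt φ φ' b) (a : E) : φ' (a - b) ≤ φ a - φ b := by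
  let ℓ : ℝ →ᵃ[ℝ] E := AffineMap.lineMap b a
  have hℓ : HasDerivAt (φ ∘ ℓ) (φ' (a - b)) 0 :=
    hb.comp_hasDerivAt_of_eq 0 AffineMap.hasDerivAt_lineMap (by simp [ℓ])
  simpa [ℓ, slope_def_field] using
    (hφ.comp_affineMap ℓ).le_slope_of_hasDerivAt (mem_univ 0) (mem_univ 1) one_pos hℓ

section Bregman

variable {k : ℕ} {φ : EuclideanSpace ℝ (Fin k) → ℝ}

theorem bregman_nonneg (hφ : ConvexOn ℝ univ φ) (hφd : Differentiable ℝ φ)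
    (a b : EuclideanSpace ℝ (Fin k)) : 0 ≤ bregman φ a b :=
  sub_nonneg.2 (hφ.apply_sub_le_of_hasFDerivAt (hφd b).hasFDerivAt a)

theorem bregman_eq_zero_iff (hφ : StrictConvexOn ℝ univ φ) (hφd : Differentiable ℝ φ)
    {a b : EuclideanSpace ℝ (Fin k)} : bregman φ a b = 0 ↔ a = b := by
  refine ⟨fun h => ?_, fun h => by simp [h, bregman]⟩
  by_contra hab
  -- The tangent at `b` meets `φ` at `a` and `b`, so it would lie above `φ` at the midpoint.
  have hmid := bregman_nonneg hφ.convexOn hφd ((1 / 2 : ℝ) • a + (1 / 2 : ℝ) • b) b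
  have hstrict := hφ.2 (mem_univ a) (mem_univ b) hab (by norm_num : (0 : ℝ) < 1 / 2)
    (by norm_num : (0 : ℝ) < 1 / 2) (by norm_num)
  have hsub : (1 / 2 : ℝ) • a + (1 / 2 : ℝ) • b - b = (1 / 2 : ℝ) • (a - b) := by module
  simp only [bregman, hsub, map_smul, smul_eq_mul] at h hmid hstrict
  linarith

theorem bregman_three_point (a b c : EuclideanSpace ℝ (Fin k)) :
    bregman φ a c = bregman φ a b + bregman φ b c + (fderiv ℝ φ b - fderiv ℝ φ c) (a - b) := by
  have : a - c = (a - b) + (b - c) := by abel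
  simp only [bregman, this, map_add, sub_apply]
  ring

end Bregman

section Integration

variable {Ω : Type*} {m mΩ : MeasurableSpace Ω} {μ : Measure Ω}

theorem MeasureTheory.Integrable.lintegral_ofReal_ne_top {f : Ω → ℝ} (hf : Integrable f μ) :
    ∫⁻ ω, ENNReal.ofReal (f ω) ∂μ ≠ ⊤ :=
  ((lintegral_mono fun ω => Real.ofReal_le_enorm (f ω)).trans_lt hf.2).ne

theorem integrable_of_le_of_setIntegral_nonneg {t q : Ω → ℝ} {s : ℕ → Set Ω}
    (hs_mono : Monotone s) (hs_univ : ⋃ n, s n = univ)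
    (ht : AEStronglyMeasurable t μ) (hq : Integrable q μ) (htq : ∀ ω, t ω ≤ q ω)
    (ht_int : ∀ n, IntegrableOn t (s n) μ) (ht_nonneg : ∀ n, 0 ≤ ∫ ω in s n, t ω ∂μ) :
    Integrable t μ := by
  have hneg : ∫⁻ ω, ENNReal.ofReal (-t ω) ∂μ ≤ ∫⁻ ω, ENNReal.ofReal (q ω) ∂μ := by
    rw [← setLIntegral_univ, ← hs_univ, setLIntegral_iUnion_of_directed _ hs_mono.directed_le]
    refine iSup_le fun n => ?_
    have hsplit := integral_eq_lintegral_pos_part_sub_lintegral_neg_part (ht_int n)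
    calc ∫⁻ ω in s n, ENNReal.ofReal (-t ω) ∂μ ≤ ∫⁻ ω in s n, ENNReal.ofReal (t ω) ∂μ :=
          (ENNReal.toReal_le_toReal (ht_int n).fun_neg.lintegral_ofReal_ne_top
            (ht_int n).lintegral_ofReal_ne_top).1 (by linarith [ht_nonneg n])
      _ ≤ ∫⁻ ω in s n, ENNReal.ofReal (q ω) ∂μ :=
          lintegral_mono fun ω => ENNReal.ofReal_le_ofReal (htq ω)
      _ ≤ ∫⁻ ω, ENNReal.ofReal (q ω) ∂μ := setLIntegral_le_lintegral _ _
  refine ⟨ht, ?_⟩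
  calc ∫⁻ ω, ‖t ω‖ₑ ∂μ ≤ ∫⁻ ω, ENNReal.ofReal (q ω) + ENNReal.ofReal (-t ω) ∂μ := by
        refine lintegral_mono fun ω => ?_
        rw [Real.enorm_eq_ofReal_abs]
        rcases le_total 0 (t ω) with h | h
        · rw [abs_of_nonneg h]
          exact le_add_right (ENNReal.ofReal_le_ofReal (htq ω))
        · rw [abs_of_nonpos h]
          exact le_add_left le_rfl
    _ = ∫⁻ ω, ENNReal.ofReal (q ω) ∂μ + ∫⁻ ω, ENNReal.ofReal (-t ω) ∂μ :=
        lintegral_add_left' hq.1.aemeasurable.ennreal_ofReal _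
    _ < ⊤ := ENNReal.add_lt_top.2 ⟨hq.lintegral_ofReal_ne_top.lt_top,
        hneg.trans_lt hq.lintegral_ofReal_ne_top.lt_top⟩

/-- The remainder `s` need not be integrable; it only has to become integrable, with mean zero,
once it is bounded on one side by an integrable function. -/
theorem lintegral_ofReal_eq_add_of_centered_remainder {f g h s : Ω → ℝ} (hf0 : ∀ ω, 0 ≤ f ω)
    (hg0 : ∀ ω, 0 ≤ g ω) (hh0 : ∀ ω, 0 ≤ h ω) (hg : AEStronglyMeasurable g μ)
    (hh : AEStronglyMeasurable h μ) (hf : Integrable f μ) (hfgh : ∀ ω, h ω = f ω + g ω + s ω)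
    (hs_le : ∀ q, Integrable q μ → (∀ ω, s ω ≤ q ω) → Integrable s μ)
    (hs_ge : ∀ q, Integrable q μ → (∀ ω, q ω ≤ s ω) → Integrable s μ)
    (hs0 : Integrable s μ → ∫ ω, s ω ∂μ = 0) :
    ∫⁻ ω, ENNReal.ofReal (h ω) ∂μ
      = ∫⁻ ω, ENNReal.ofReal (f ω) ∂μ + ∫⁻ ω, ENNReal.ofReal (g ω) ∂μ := by
  by_cases hg_int : Integrable g μ
  · have hs : Integrable s μ := hs_ge (fun ω => -(f ω + g ω)) (hf.add hg_int).neg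
      fun ω => by linarith [hh0 ω, hfgh ω]
    have hh_int : Integrable h μ :=
      ((hf.add hg_int).add hs).congr (ae_of_all _ fun ω => (hfgh ω).symm)
    rw [← ofReal_integral_eq_lintegral_ofReal hh_int (ae_of_all _ hh0),
      ← ofReal_integral_eq_lintegral_ofReal hf (ae_of_all _ hf0),
      ← ofReal_integral_eq_lintegral_ofReal hg_int (ae_of_all _ hg0),
      ← ENNReal.ofReal_add (integral_nonneg hf0) (integral_nonneg hg0),
      integral_congr_ae (ae_of_all _ hfgh),
      integral_add (f := fun ω => f ω + g ω) (hf.add hg_int) hs,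
      integral_add hf hg_int, hs0 hs, add_zero]
  · have hh_int : ¬Integrable h μ := fun hh_int => hg_int <| by
      have hs := hs_le (fun ω => h ω - f ω) (hh_int.sub hf) fun ω => by linarith [hg0 ω, hfgh ω]
      exact ((hh_int.sub hf).sub hs).congr (ae_of_all _ fun ω => by
        simp only [Pi.sub_apply]; linarith [hfgh ω])
    rw [← lintegral_ofReal_ne_top_iff_integrable hg (ae_of_all _ hg0), not_not] at hg_int
    rw [← lintegral_ofReal_ne_top_iff_integrable hh (ae_of_all _ hh0), not_not] at hh_int
    rw [hg_int, hh_int, add_top]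

variable {E : Type*} [NormedAddCommGroup E] [NormedSpace ℝ E] [CompleteSpace E]

theorem condExp_sub_condExp_ae_eq_zero (hm : m ≤ mΩ) [SigmaFinite (μ.trim hm)] {X : Ω → E}
    (hX : Integrable X μ) : μ[X - μ[X|m]|m] =ᵐ[μ] 0 := by
  filter_upwards [condExp_sub hX integrable_condExp m] with ω hω
  rw [hω, Pi.sub_apply,
    condExp_of_stronglyMeasurable hm stronglyMeasurable_condExp integrable_condExp,
    sub_self, Pi.zero_apply]

theorem integral_clm_apply_eq_zero_of_condExp_eq_zero {F : Type*} [NormedAddCommGroup F]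
    [NormedSpace ℝ F] [CompleteSpace F] (hm : m ≤ mΩ) [SigmaFinite (μ.trim hm)]
    {W : Ω → E} {V : Ω → E →L[ℝ] F} (hW : Integrable W μ) (hW0 : μ[W|m] =ᵐ[μ] 0)
    (hV : StronglyMeasurable[m] V) (hVW : Integrable (fun ω => V ω (W ω)) μ) :
    ∫ ω, V ω (W ω) ∂μ = 0 := by
  have hpull : μ[fun ω => V ω (W ω)|m] =ᵐ[μ] fun ω => V ω (μ[W|m] ω) :=
    condExp_bilin_of_stronglyMeasurable_left (ContinuousLinearMap.id ℝ _) hV hVW hW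
  rw [← integral_condExp hm, integral_congr_ae hpull]
  refine (integral_congr_ae ?_).trans (integral_zero Ω F)
  filter_upwards [hW0] with ω hω
  simp [hω]

theorem integrable_clm_apply_of_le_of_condExp_eq_zero (hm : m ≤ mΩ) [SigmaFinite (μ.trim hm)]
    {W : Ω → E} {V : Ω → E →L[ℝ] ℝ} (hW : Integrable W μ) (hW0 : μ[W|m] =ᵐ[μ] 0)
    (hV : StronglyMeasurable[m] V) {q : Ω → ℝ} (hq : Integrable q μ)
    (hVWq : ∀ ω, V ω (W ω) ≤ q ω) : Integrable (fun ω => V ω (W ω)) μ := by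
  set s : ℕ → Set Ω := fun n => {ω | ‖V ω‖ ≤ n}
  have hs : ∀ n, MeasurableSet[m] (s n) := fun n => hV.norm.measurable measurableSet_Iic
  have hs_mono : Monotone s := fun i j hij ω (hω : ‖V ω‖ ≤ i) => hω.trans (Nat.cast_le.2 hij)
  have hs_univ : ⋃ n, s n = univ :=
    eq_univ_of_forall fun ω => mem_iUnion.2 (exists_nat_ge ‖V ω‖)
  have hind : ∀ n, (s n).indicator (fun ω => V ω (W ω)) = fun ω => (s n).indicator V ω (W ω) :=
    fun n => funext fun ω => by by_cases hω : ω ∈ s n <;> simp [hω]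
  have hVn : ∀ n, StronglyMeasurable[m] ((s n).indicator V) := fun n => hV.indicator (hs n)
  have hVn_int : ∀ n, Integrable (fun ω => (s n).indicator V ω (W ω)) μ := fun n =>
    (ContinuousLinearMap.id ℝ _).integrable_of_bilin_of_bdd_left n
      ((hVn n).mono hm).aestronglyMeasurable
      (ae_of_all _ fun ω => by
        rw [norm_indicator_eq_indicator_norm]
        exact indicator_apply_le' id fun _ => n.cast_nonneg) hW
  refine integrable_of_le_of_setIntegral_nonneg hs_mono hs_univ
    ((ContinuousLinearMap.id ℝ _).aestronglyMeasurable_comp₂ (hV.mono hm).aestronglyMeasurable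
      hW.1) hq hVWq (fun n => ?_) (fun n => ?_)
  · rw [← integrable_indicator_iff (hm _ (hs n)), hind]
    exact hVn_int n
  · rw [← integral_indicator (hm _ (hs n)), hind,
      integral_clm_apply_eq_zero_of_condExp_eq_zero hm hW hW0 (hVn n) (hVn_int n)]

end Integration

section BregmanIntegral

variable {Ω : Type*} {m mΩ : MeasurableSpace Ω} {μ : Measure Ω}
  {k : ℕ} {φ : EuclideanSpace ℝ (Fin k) → ℝ}

theorem aestronglyMeasurable_bregman (hφd : Differentiable ℝ φ)
    {F G : Ω → EuclideanSpace ℝ (Fin k)}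
    (hF : AEStronglyMeasurable F μ) (hG : AEStronglyMeasurable G μ) :
    AEStronglyMeasurable (fun ω => bregman φ (F ω) (G ω)) μ := by
  have hdG : AEStronglyMeasurable (fun ω => fderiv ℝ φ (G ω)) μ :=
    ((measurable_fderiv ℝ φ).comp_aemeasurable hG.aemeasurable).aestronglyMeasurable
  exact ((hφd.continuous.comp_aestronglyMeasurable hF).sub
    (hφd.continuous.comp_aestronglyMeasurable hG)).sub
    ((ContinuousLinearMap.id ℝ _).aestronglyMeasurable_comp₂ hdG (hF.sub hG))

theorem lintegral_ofReal_bregman_eq_zero_iff (hφ : StrictConvexOn ℝ univ φ)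
    (hφd : Differentiable ℝ φ) {F G : Ω → EuclideanSpace ℝ (Fin k)}
    (hF : AEStronglyMeasurable F μ) (hG : AEStronglyMeasurable G μ) :
    ∫⁻ ω, ENNReal.ofReal (bregman φ (F ω) (G ω)) ∂μ = 0 ↔ F =ᵐ[μ] G := by
  rw [lintegral_eq_zero_iff' (aestronglyMeasurable_bregman hφd hF hG).aemeasurable.ennreal_ofReal]
  refine eventually_congr (ae_of_all _ fun ω => ?_)
  rw [Pi.zero_apply, ENNReal.ofReal_eq_zero, (bregman_nonneg hφ.convexOn hφd _ _).ge_iff_eq',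
    bregman_eq_zero_iff hφ hφd]

variable [IsFiniteMeasure μ] {X : Ω → EuclideanSpace ℝ (Fin k)}

theorem integrable_bregman_condExp (hm : m ≤ mΩ) (hφ : ConvexOn ℝ univ φ)
    (hφd : Differentiable ℝ φ) (hX : Integrable X μ) (hφX : Integrable (fun ω => φ (X ω)) μ) :
    Integrable (fun ω => bregman φ (X ω) (μ[X|m] ω)) μ := by
  set Z := μ[X|m]
  have hgrad (a b) : fderiv ℝ φ b (a - b) ≤ φ a - φ b :=
    hφ.apply_sub_le_of_hasFDerivAt (hφd b).hasFDerivAt a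
  -- The tangent of `φ` at `0` bounds `φ ∘ Z` from below by an integrable function.
  set q : Ω → ℝ := fun ω => φ (X ω) - φ 0 - fderiv ℝ φ 0 (Z ω)
  have hq : Integrable q μ :=
    (hφX.sub (integrable_const _)).sub ((fderiv ℝ φ 0).integrable_comp integrable_condExp)
  have hqZ (ω) : φ (X ω) - φ (Z ω) ≤ q ω := by
    have := hgrad (Z ω) 0
    simp only [sub_zero] at this
    linarith
  have ht : Integrable (fun ω => fderiv ℝ φ (Z ω) (X ω - Z ω)) μ :=
    integrable_clm_apply_of_le_of_condExp_eq_zero hm (hX.sub integrable_condExp)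
      (condExp_sub_condExp_ae_eq_zero hm hX)
      ((measurable_fderiv ℝ φ).comp stronglyMeasurable_condExp.measurable).stronglyMeasurable hq
      fun ω => (hgrad (X ω) (Z ω)).trans (hqZ ω)
  refine (hq.sub ht).mono' (aestronglyMeasurable_bregman hφd hX.1 integrable_condExp.1)
    (ae_of_all _ fun ω => ?_)
  rw [Real.norm_of_nonneg (bregman_nonneg hφ hφd _ _), Pi.sub_apply, bregman]
  linarith [hqZ ω]

theorem lintegral_bregman_condExp_add (hm : m ≤ mΩ) (hφ : ConvexOn ℝ univ φ)
    (hφd : Differentiable ℝ φ) (hX : Integrable X μ) (hφX : Integrable (fun ω => φ (X ω)) μ)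
    {Y : Ω → EuclideanSpace ℝ (Fin k)} (hY : StronglyMeasurable[m] Y) :
    ∫⁻ ω, ENNReal.ofReal (bregman φ (X ω) (Y ω)) ∂μ
      = ∫⁻ ω, ENNReal.ofReal (bregman φ (X ω) (μ[X|m] ω)) ∂μ
        + ∫⁻ ω, ENNReal.ofReal (bregman φ (μ[X|m] ω) (Y ω)) ∂μ := by
  set Z := μ[X|m]
  set V := fun ω => fderiv ℝ φ (Z ω) - fderiv ℝ φ (Y ω)
  have hV : StronglyMeasurable[m] V :=
    (((measurable_fderiv ℝ φ).comp stronglyMeasurable_condExp.measurable).sub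
      ((measurable_fderiv ℝ φ).comp hY.measurable)).stronglyMeasurable
  have hW := hX.sub (integrable_condExp (m := m) (f := X))
  have hW0 := condExp_sub_condExp_ae_eq_zero hm hX
  have hYμ := (hY.mono hm).aestronglyMeasurable (μ := μ)
  refine lintegral_ofReal_eq_add_of_centered_remainder (s := fun ω => V ω (X ω - Z ω))
    (fun ω => bregman_nonneg hφ hφd _ _) (fun ω => bregman_nonneg hφ hφd _ _)
    (fun ω => bregman_nonneg hφ hφd _ _)
    (aestronglyMeasurable_bregman hφd integrable_condExp.1 hYμ)
    (aestronglyMeasurable_bregman hφd hX.1 hYμ) (integrable_bregman_condExp hm hφ hφd hX hφX)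
    (fun ω => bregman_three_point _ _ _)
    (fun q hq hle => integrable_clm_apply_of_le_of_condExp_eq_zero hm hW hW0 hV hq hle)
    (fun q hq hle => ?_) (integral_clm_apply_eq_zero_of_condExp_eq_zero hm hW hW0 hV)
  have := integrable_clm_apply_of_le_of_condExp_eq_zero hm hW hW0 hV.neg hq.neg
    fun ω => neg_le_neg (hle ω)
  exact this.neg.congr (ae_of_all _ fun ω => neg_neg _)

end BregmanIntegral

theorem condexp_unique_bregman_projection_general
    {Ω : Type*} {mΩ : MeasurableSpace Ω} (μ : Measure Ω) [IsProbabilityMeasure μ]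
    {k : ℕ} (φ : EuclideanSpace ℝ (Fin k) → ℝ)
    (hφconv : StrictConvexOn ℝ Set.univ φ) (hφdiff : Differentiable ℝ φ)
    (X : Ω → EuclideanSpace ℝ (Fin k)) (hXint : Integrable X μ)
    (hφXint : Integrable (fun ω => φ (X ω)) μ)
    (m : MeasurableSpace Ω) (hm : m ≤ mΩ)
    (Y : Ω → EuclideanSpace ℝ (Fin k)) (hYmeas : StronglyMeasurable[m] Y) :
    (∫⁻ ω, ENNReal.ofReal (bregman φ (X ω) (Y ω)) ∂μ)
      ≥ (∫⁻ ω, ENNReal.ofReal (bregman φ (X ω) ((μ[X|m]) ω)) ∂μ) ∧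
    ((∫⁻ ω, ENNReal.ofReal (bregman φ (X ω) (Y ω)) ∂μ)
        = (∫⁻ ω, ENNReal.ofReal (bregman φ (X ω) ((μ[X|m]) ω)) ∂μ)
      ↔ Y =ᵐ[μ] μ[X|m]) := by
  have hfin : ∫⁻ ω, ENNReal.ofReal (bregman φ (X ω) (μ[X|m] ω)) ∂μ ≠ ⊤ :=
    (integrable_bregman_condExp hm hφconv.convexOn hφdiff hXint hφXint).lintegral_ofReal_ne_top
  rw [lintegral_bregman_condExp_add hm hφconv.convexOn hφdiff hXint hφXint hYmeas,
    eventuallyEq_comm, ← lintegral_ofReal_bregman_eq_zero_iff hφconv hφdiff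
      integrable_condExp.1 (hYmeas.mono hm).aestronglyMeasurable]
  exact ⟨le_self_add, fun h => (ENNReal.add_right_inj hfin).1 (h.trans (add_zero _).symm),
    fun h => by rw [h, add_zero]⟩

/-- Conditional expectation is the unique Bregman projection: for `φ : ℝ^k → ℝ` strictly convex
and differentiable, `X` integrable with `E[φ(X)]` finite, and any `m`-measurable integrable `Y`,
`E[D_φ(X,Y)] ≥ E[D_φ(X, E[X|m])]` with equality iff `Y = E[X|m]` a.s. -/
theorem condexp_unique_bregman_projection
    {Ω : Type*} {mΩ : MeasurableSpace Ω} (μ : Measure Ω) [IsProbabilityMeasure μ]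
    {k : ℕ} (φ : EuclideanSpace ℝ (Fin k) → ℝ)
    (hφconv : StrictConvexOn ℝ Set.univ φ) (hφdiff : Differentiable ℝ φ)
    (X : Ω → EuclideanSpace ℝ (Fin k)) (hXint : Integrable X μ)
    (hφXint : Integrable (fun ω => φ (X ω)) μ)
    (m : MeasurableSpace Ω) (hm : m ≤ mΩ)
    (Y : Ω → EuclideanSpace ℝ (Fin k)) (hYmeas : StronglyMeasurable[m] Y)
    (hYint : Integrable Y μ) :
    (∫⁻ ω, ENNReal.ofReal (bregman φ (X ω) (Y ω)) ∂μ)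
      ≥ (∫⁻ ω, ENNReal.ofReal (bregman φ (X ω) ((μ[X|m]) ω)) ∂μ) ∧
    ((∫⁻ ω, ENNReal.ofReal (bregman φ (X ω) (Y ω)) ∂μ)
        = (∫⁻ ω, ENNReal.ofReal (bregman φ (X ω) ((μ[X|m]) ω)) ∂μ)
      ↔ Y =ᵐ[μ] μ[X|m]) :=
  condexp_unique_bregman_projection_general μ φ hφconv hφdiff X hXint hφXint m hm Y hYmeas
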